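/- arXiv:math/0304152 — 3 statements merged into one kernel-verified Lean document; each statement's English description precedes it below -/
import Mathlib

section
/- Let $I \subseteq (0,1]$ with $1 \in I$. With $D(I)$ as defined (the set of $a \leq 1$ of the form $\frac{m-1}{m} + \frac{f}{m}$, $m \in \mathbb{N}_{\geq 1}$, $f \in I_+$), we have $D(D(I)) = D(I)$. -/
/-- `Iplus I` : the set of all finite (nonempty) sums of elements of `I`
that are less than one. -/
def Iplus (I : Set ℝ) : Set ℝ :=
  {x | ∃ l : List ℝ, l ≠ [] ∧ (∀ y ∈ l, y ∈ I) ∧ l.sum = x ∧ x < 1}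

/-- `DD I` : the set of `a ≤ 1` of the form `(m-1)/m + f/m` with `m` a
positive integer and `f ∈ Iplus I`. -/
def DD (I : Set ℝ) : Set ℝ :=
  {a | a ≤ 1 ∧ ∃ m : ℕ, 0 < m ∧ ∃ f ∈ Iplus I, a = ((m : ℝ) - 1) / m + f / m}

/-- A set of reals satisfies DCC if it contains no infinite strictly
decreasing sequence. -/
def DCC (S : Set ℝ) : Prop := ¬ ∃ f : ℕ → ℝ, (∀ n, f n ∈ S) ∧ StrictAnti f

/-- A set of reals satisfies ACC if it contains no infinite strictly
increasing sequence. -/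
def ACC (S : Set ℝ) : Prop := ¬ ∃ f : ℕ → ℝ, (∀ n, f n ∈ S) ∧ StrictMono f

/-!
Every element of `D(I)` is either already in `I₊` (the case `m = 1`) or at least `1/2`.
Hence in a sum `x + y < 1` of two elements of `D(I)` one summand, say `x`, lies in `I₊`,
and `x + (n-1)/n + h/n = (n-1)/n + (n x + h)/n` with `n x + h ∈ I₊`; by induction `D(I)` is
closed under sums less than one, i.e. `D(I)₊ ⊆ D(I)`. The composition formula
`(m-1)/m + ((n-1)/n + g/n)/m = (mn-1)/(mn) + g/(mn)` then gives `D(D(I)) ⊆ D(I)`,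
and the reverse inclusion is the case `m = 1`.
-/

section

variable {I : Set ℝ}

lemma sub_one_div_add_div_lt_one {m : ℕ} (hm : 0 < m) {f : ℝ} (hf : f < 1) :
    ((m : ℝ) - 1) / m + f / m < 1 := by
  have hm' : (0 : ℝ) < m := by exact_mod_cast hm
  rw [← add_div, div_lt_one hm']
  linarith

lemma sub_one_div_add_div_comp {m n : ℕ} (hm : 0 < m) (hn : 0 < n) (g : ℝ) :
    ((m : ℝ) - 1) / m + (((n : ℝ) - 1) / n + g / n) / m
      = (((m * n : ℕ) : ℝ) - 1) / (m * n : ℕ) + g / (m * n : ℕ) := by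
  have hm' : (m : ℝ) ≠ 0 := by positivity
  have hn' : (n : ℝ) ≠ 0 := by positivity
  push_cast
  field_simp
  ring

lemma lt_one_of_mem_Iplus {f : ℝ} (hf : f ∈ Iplus I) : f < 1 := by
  obtain ⟨-, -, -, -, h⟩ := hf
  exact h

lemma nonneg_of_mem_Iplus (hI : I ⊆ Set.Ici 0) {f : ℝ} (hf : f ∈ Iplus I) : 0 ≤ f := by
  obtain ⟨l, -, hl, rfl, -⟩ := hf
  exact List.sum_nonneg fun y hy => hI (hl y hy)

lemma mem_Iplus_of_mem {a : ℝ} (ha : a ∈ I) (ha1 : a < 1) : a ∈ Iplus I :=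
  ⟨[a], by simp, by simpa using ha, by simp, ha1⟩

lemma natCast_mul_add_mem_Iplus (n : ℕ) {f g : ℝ} (hf : f ∈ Iplus I) (hg : g ∈ Iplus I)
    (h : n * f + g < 1) : n * f + g ∈ Iplus I := by
  obtain ⟨lf, -, hlf, rfl, -⟩ := hf
  obtain ⟨lg, hne, hlg, rfl, -⟩ := hg
  refine ⟨(List.replicate n lf).flatten ++ lg, by simp [hne], ?_, ?_, h⟩
  · simp only [List.mem_append, List.mem_flatten, List.mem_replicate]
    rintro y (⟨l, ⟨-, rfl⟩, hy⟩ | hy)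
    exacts [hlf y hy, hlg y hy]
  · rw [List.sum_append, List.sum_flatten, List.map_replicate, List.sum_replicate, nsmul_eq_mul]

lemma mem_DD_of_eq {a f : ℝ} {m : ℕ} (hm : 0 < m) (hf : f ∈ Iplus I)
    (ha : a = ((m : ℝ) - 1) / m + f / m) : a ∈ DD I :=
  ⟨ha ▸ (sub_one_div_add_div_lt_one hm (lt_one_of_mem_Iplus hf)).le, m, hm, f, hf, ha⟩

lemma lt_one_of_mem_DD {a : ℝ} (ha : a ∈ DD I) : a < 1 := by
  obtain ⟨-, m, hm, f, hf, rfl⟩ := ha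
  exact sub_one_div_add_div_lt_one hm (lt_one_of_mem_Iplus hf)

lemma nonneg_of_mem_DD (hI : I ⊆ Set.Ici 0) {a : ℝ} (ha : a ∈ DD I) : 0 ≤ a := by
  obtain ⟨-, m, hm, f, hf, rfl⟩ := ha
  have hm1 : (1 : ℝ) ≤ m := by exact_mod_cast hm
  have := nonneg_of_mem_Iplus hI hf
  rw [← add_div]
  exact div_nonneg (by linarith) (by linarith)

lemma Iplus_subset_DD (I : Set ℝ) : Iplus I ⊆ DD I :=
  fun _ hf => mem_DD_of_eq one_pos hf (by simp)

lemma DD_subset_Iplus_DD (I : Set ℝ) : DD I ⊆ Iplus (DD I) :=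
  fun _ ha => mem_Iplus_of_mem ha (lt_one_of_mem_DD ha)

lemma DD_subset_of_Iplus_subset {J : Set ℝ} (h : Iplus J ⊆ DD I) : DD J ⊆ DD I := by
  rintro a ⟨-, m, hm, f, hf, rfl⟩
  obtain ⟨-, n, hn, g, hg, rfl⟩ := h hf
  exact mem_DD_of_eq (Nat.mul_pos hm hn) hg (sub_one_div_add_div_comp hm hn g)

lemma mem_Iplus_or_half_le_of_mem_DD (hI : I ⊆ Set.Ici 0) {a : ℝ} (ha : a ∈ DD I) :
    a ∈ Iplus I ∨ 1 / 2 ≤ a := by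
  obtain ⟨-, m, hm, f, hf, rfl⟩ := ha
  rcases Nat.lt_or_ge m 2 with hm2 | hm2
  · obtain rfl : m = 1 := by omega
    left
    simpa using hf
  · right
    have hm2' : (2 : ℝ) ≤ m := by exact_mod_cast hm2
    have hf0 := nonneg_of_mem_Iplus hI hf
    rw [← add_div, le_div_iff₀ (by linarith)]
    linarith

lemma add_mem_DD_of_mem_Iplus {x y : ℝ} (hx : x ∈ Iplus I) (hy : y ∈ DD I) (hxy : x + y < 1) :
    x + y ∈ DD I := by
  obtain ⟨-, n, hn, h, hh, rfl⟩ := hy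
  have hn' : (0 : ℝ) < n := by exact_mod_cast hn
  have hsum : x + (((n : ℝ) - 1) / n + h / n) = ((n : ℝ) - 1) / n + (n * x + h) / n := by
    field_simp
    ring
  refine mem_DD_of_eq hn (natCast_mul_add_mem_Iplus n hx hh ?_) hsum
  rw [hsum, ← add_div, div_lt_one hn'] at hxy
  linarith

lemma add_mem_DD (hI : I ⊆ Set.Ici 0) {x y : ℝ} (hx : x ∈ DD I) (hy : y ∈ DD I)
    (hxy : x + y < 1) : x + y ∈ DD I := by
  rcases mem_Iplus_or_half_le_of_mem_DD hI hx with hx' | hx'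
  · exact add_mem_DD_of_mem_Iplus hx' hy hxy
  rcases mem_Iplus_or_half_le_of_mem_DD hI hy with hy' | hy'
  · rw [add_comm] at hxy ⊢
    exact add_mem_DD_of_mem_Iplus hy' hx hxy
  · linarith

lemma Iplus_DD_subset (hI : I ⊆ Set.Ici 0) : Iplus (DD I) ⊆ DD I := by
  rintro _ ⟨l, hne, hl, rfl, hlt⟩
  induction l with
  | nil => contradiction
  | cons b t ih =>
    rw [List.sum_cons] at hlt ⊢
    have hb := hl b List.mem_cons_self
    rcases eq_or_ne t [] with rfl | ht
    · simpa using hb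
    have ht' := ih ht (fun y hy => hl y (List.mem_cons_of_mem b hy))
      (by linarith [nonneg_of_mem_DD hI hb])
    exact add_mem_DD hI hb ht' hlt

end

theorem DD_DD_eq_general (I : Set ℝ) (hI : I ⊆ Set.Ioc 0 1) :
    DD (DD I) = DD I :=
  have hI0 : I ⊆ Set.Ici 0 := hI.trans (Set.Ioc_subset_Ioi_self.trans Set.Ioi_subset_Ici_self)
  (DD_subset_of_Iplus_subset (Iplus_DD_subset hI0)).antisymm
    ((DD_subset_Iplus_DD I).trans (Iplus_subset_DD _))

/-- Lemma 4.4(2): `D(D(I)) = D(I)`. -/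
theorem DD_DD_eq (I : Set ℝ) (hI : I ⊆ Set.Ioc 0 1) (h1 : (1 : ℝ) ∈ I) :
    DD (DD I) = DD I :=
  DD_DD_eq_general I hI
end

section
/- Let $I \subseteq (0,1]$ satisfy the descending chain condition, and let $D(I)$ be the set of numbers of the form $b = \frac{m-1}{m} + \frac{a}{m}$ with $m$ a positive integer and $a \in I_+$. Then $D(I) \cap (0,1)$ contains no strictly decreasing sequence. -/
lemma dcc_iff_isWF (S : Set ℝ) : DCC S ↔ S.IsWF := by
  rw [Set.isWF_iff_no_descending_seq]
  constructor
  · intro h f hf hmem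
    exact h ⟨f, fun n => hmem n, hf⟩
  · rintro h ⟨f, hmem, hf⟩
    exact h f hf hmem

lemma iplus_isWF (I : Set ℝ) (hI : I ⊆ Set.Ioc 0 1) (hdcc : DCC I) :
    (Iplus I).IsWF := by
  have hWF : I.IsWF := (dcc_iff_isWF I).mp hdcc
  have hcl : Set.IsPWO (AddSubmonoid.closure I : Set ℝ) :=
    hWF.isPWO.addSubmonoid_closure (fun x hx => (hI hx).1.le)
  refine (hcl.isWF).mono ?_
  rintro x ⟨l, -, hmem, hsum, -⟩
  rw [← hsum]
  exact AddSubmonoid.list_sum_mem _ (fun y hy => AddSubmonoid.subset_closure (hmem y hy))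

/-- If `I ⊆ (0,1]` satisfies DCC, then `D(I) ∩ (0,1)` contains no strictly
decreasing sequence. -/
theorem DD_inter_Ioo_no_strictAnti (I : Set ℝ) (hI : I ⊆ Set.Ioc 0 1)
    (hdcc : DCC I) :
    ¬ ∃ f : ℕ → ℝ, (∀ n, f n ∈ DD I ∩ Set.Ioo 0 1) ∧ StrictAnti f := by
  rintro ⟨f, hmem, hanti⟩
  -- extract the data
  choose hle m hm a ha hfa using fun n => (hmem n).1
  -- Iplus elements are positive
  have hIpos : ∀ x ∈ Iplus I, 0 < x := by
    rintro x ⟨l, hne, hl, hsum, -⟩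
    rw [← hsum]
    rcases List.exists_cons_of_ne_nil hne with ⟨y, t, rfl⟩
    have : ∀ z ∈ (y :: t), 0 < z := fun z hz => (hI (hl z hz)).1
    calc (0:ℝ) < y := this y (by simp)
    _ ≤ (y :: t).sum := by
        simp only [List.sum_cons, le_add_iff_nonneg_right]
        exact List.sum_nonneg fun z hz => (this z (by simp [hz])).le
  -- m n is bounded
  have hb : ∀ n, (m n : ℝ) ≤ 1 / (1 - f 0) := by
    intro n
    have hf0 : f n ≤ f 0 := hanti.antitone (Nat.zero_le n)
    have hlt1 : f 0 < 1 := (hmem 0).2.2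
    have hmpos : (0:ℝ) < m n := by exact_mod_cast hm n
    have h1 : ((m n : ℝ) - 1) / m n ≤ f 0 := by
      have := hIpos _ (ha n)
      have : ((m n : ℝ) - 1) / m n ≤ f n := by
        rw [hfa n]
        have : 0 < a n / m n := div_pos (hIpos _ (ha n)) hmpos
        linarith
      linarith
    rw [div_le_iff₀ hmpos] at h1
    rw [le_div_iff₀ (by linarith : (0:ℝ) < 1 - f 0)]
    nlinarith
  -- pigeonhole: some value of m occurs infinitely often
  obtain ⟨N, hN⟩ : ∃ N : ℕ, ∀ n, m n ≤ N := by
    obtain ⟨N, hN⟩ := exists_nat_ge (1 / (1 - f 0))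
    exact ⟨N, fun n => by exact_mod_cast (hb n).trans hN⟩
  obtain ⟨m₀, hfib⟩ :=
    Finite.exists_infinite_fiber (fun n => (⟨m n, Nat.lt_succ_of_le (hN n)⟩ : Fin (N + 1)))
  have hinf : {n | m n = (m₀ : ℕ)}.Infinite := by
    rw [← Set.infinite_coe_iff]
    refine Set.infinite_coe_iff.mpr (Set.Infinite.mono ?_ (Set.infinite_coe_iff.mp hfib))
    intro n hn
    simp only [Set.mem_preimage, Set.mem_singleton_iff] at hn
    have : m n = (m₀ : ℕ) := by
      have := congrArg Fin.val hn
      simpa using this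
    exact this
  set p : ℕ → Prop := fun n => m n = (m₀ : ℕ) with hp
  have hinf' : (setOf p).Infinite := hinf
  -- build a strictly decreasing sequence in Iplus
  have hm₀pos : 0 < (m₀ : ℕ) := by
    have h0 : m (Nat.nth p 0) = (m₀ : ℕ) := Nat.nth_mem_of_infinite hinf' 0
    rw [← h0]; exact hm _
  refine (dcc_iff_isWF (Iplus I)).mpr (iplus_isWF I hI hdcc)
    ⟨fun k => a (Nat.nth p k), fun k => ha _, ?_⟩
  intro i j hij
  have hmi : m (Nat.nth p i) = (m₀ : ℕ) := Nat.nth_mem_of_infinite hinf' i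
  have hmj : m (Nat.nth p j) = (m₀ : ℕ) := Nat.nth_mem_of_infinite hinf' j
  have hflt : f (Nat.nth p j) < f (Nat.nth p i) :=
    hanti (Nat.nth_strictMono hinf' hij)
  have hm₀pos' : (0:ℝ) < (m₀ : ℕ) := by exact_mod_cast hm₀pos
  have h1 := hfa (Nat.nth p i)
  have h2 := hfa (Nat.nth p j)
  rw [hmi] at h1
  rw [hmj] at h2
  rw [h1, h2, add_lt_add_iff_left, div_lt_div_iff₀ hm₀pos' hm₀pos'] at hflt
  exact lt_of_mul_lt_mul_right hflt hm₀pos'.le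
end

section
/- Suppose $r \geq 1$ and we have positive integers $m_1, \ldots, m_r$ and nonnegative integers $k_1, \ldots, k_r$, and a real $a$ with $5/6 < a < 1$, such that each term $t_i = \frac{m_i - 1}{m_i} + \frac{k_i a}{m_i}$ satisfies $t_i \leq 1$. Then $\sum_{i=1}^r t_i \neq 2$ whenever at least one $k_i > 0$. (Hence no $a \in (5/6, 1)$ lies in $N_1$.) -/
/-!
Every admissible term lies in `{0} ∪ [1/2, 1]`. A term with `k = 0` is `1 - 1/m`; a term with
`k > 0` has `k = 1` (as `2a > 1`) and lies in `[a, 1) ⊂ (5/6, 1)`. Removing one such term from a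
sum equal to `2` leaves a sum in `(1, 7/6)`, which must consist of exactly two nonzero terms, each
below `2/3`, hence of the form `1 - 1/p` and `1 - 1/q`. Then `1/p + 1/q` equals the removed term,
which lies in `(5/6, 1)`; but no sum of two unit fractions lies there.
-/

open Finset

theorem Finset.exists_pair_of_one_lt_sum_lt_three_halves {ι : Type*} {s : Finset ι} {f : ι → ℝ}
    (hf : ∀ i ∈ s, f i = 0 ∨ 1 / 2 ≤ f i) (hf_le : ∀ i ∈ s, f i ≤ 1)
    (hlo : 1 < ∑ i ∈ s, f i) (hhi : ∑ i ∈ s, f i < 3 / 2) :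
    ∃ i j, 1 / 2 ≤ f i ∧ 1 / 2 ≤ f j ∧ f i + f j = ∑ i ∈ s, f i := by
  classical
  set t := s.filter (f · ≠ 0)
  have hsum : ∑ i ∈ t, f i = ∑ i ∈ s, f i := sum_filter_ne_zero s
  have hhalf : ∀ i ∈ t, 1 / 2 ≤ f i := fun i hi ↦
    ((hf i (mem_filter.1 hi).1).resolve_left (mem_filter.1 hi).2)
  have hcard_lt : (#t : ℝ) < 3 := by
    have := card_nsmul_le_sum t f _ hhalf
    rw [nsmul_eq_mul] at this
    linarith
  have hcard_gt : (1 : ℝ) < #t := by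
    have := sum_le_card_nsmul t f 1 fun i hi ↦ hf_le i (mem_filter.1 hi).1
    rw [nsmul_eq_mul, mul_one] at this
    linarith
  have h3 : #t < 3 := by exact_mod_cast hcard_lt
  have h1 : 1 < #t := by exact_mod_cast hcard_gt
  obtain ⟨i, j, hij, ht⟩ := card_eq_two.1 (show #t = 2 by omega)
  refine ⟨i, j, hhalf i (by simp [ht]), hhalf j (by simp [ht]), ?_⟩
  rw [← hsum, ht, sum_pair hij]

theorem one_div_natCast_cases (n : ℕ) :
    (1 / n : ℝ) = 0 ∨ (1 / n : ℝ) = 1 ∨ (1 / n : ℝ) = 1 / 2 ∨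
      (0 < (1 / n : ℝ) ∧ (1 / n : ℝ) ≤ 1 / 3) := by
  obtain rfl | rfl | rfl | hn : n = 0 ∨ n = 1 ∨ n = 2 ∨ 3 ≤ n := by omega
  · simp
  · simp
  · norm_num
  · have hn' : (3 : ℝ) ≤ n := by exact_mod_cast hn
    exact Or.inr <| Or.inr <| Or.inr ⟨by positivity, one_div_le_one_div_of_le (by norm_num) hn'⟩

theorem one_div_add_one_div_notMem_Ioo (p q : ℕ) :
    (1 / p + 1 / q : ℝ) ∉ Set.Ioo (5 / 6) 1 := by
  rintro ⟨hlo, hhi⟩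
  rcases one_div_natCast_cases p with hp | hp | hp | hp <;>
  rcases one_div_natCast_cases q with hq | hq | hq | hq <;>
  linarith

noncomputable def summand (a : ℝ) (m k : ℕ) : ℝ := ((m : ℝ) - 1) / m + k * a / m

section summand

variable {a : ℝ} {m k : ℕ}

theorem summand_eq (hm : 0 < m) : summand a m k = 1 - (1 - k * a) / m := by
  have : (m : ℝ) ≠ 0 := by positivity
  unfold summand
  field_simp
  ring

theorem summand_zero (hm : 0 < m) : summand a m 0 = 1 - 1 / m := by
  simp [summand_eq hm]

theorem summand_le_one_iff (hm : 0 < m) : summand a m k ≤ 1 ↔ k * a ≤ 1 := by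
  rw [summand_eq hm, sub_le_self_iff, div_nonneg_iff]
  constructor
  · rintro (⟨h, -⟩ | ⟨-, h⟩)
    · linarith
    · exact absurd h (not_le.2 (Nat.cast_pos.2 hm))
  · exact fun h ↦ Or.inl ⟨by linarith, by positivity⟩

theorem le_one_of_summand_le_one (hm : 0 < m) (ha : 1 / 2 < a) (h : summand a m k ≤ 1) :
    k ≤ 1 := by
  rw [summand_le_one_iff hm] at h
  by_contra! hk
  have : (2 : ℝ) ≤ k := by exact_mod_cast hk
  nlinarith

theorem summand_one_mem_Ico (hm : 0 < m) (ha : a < 1) : summand a m 1 ∈ Set.Ico a 1 := by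
  have hm' : (1 : ℝ) ≤ m := by exact_mod_cast hm
  rw [summand_eq hm, Nat.cast_one, one_mul]
  have : (1 - a) / m ≤ 1 - a := div_le_self (by linarith) hm'
  have : 0 < (1 - a) / m := div_pos (by linarith) (by positivity)
  exact ⟨by linarith, by linarith⟩

theorem summand_eq_zero_or_half_le (hm : 0 < m) (ha : 1 / 2 ≤ a) :
    summand a m k = 0 ∨ 1 / 2 ≤ summand a m k := by
  by_cases h : k = 0 ∧ m = 1
  · obtain ⟨rfl, rfl⟩ := h
    simp [summand]
  · right
    have hm' : (0 : ℝ) < m := by exact_mod_cast hm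
    rw [summand, ← add_div, le_div_iff₀ hm']
    rcases Nat.eq_zero_or_pos k with rfl | hk
    · have : (2 : ℝ) ≤ m := by exact_mod_cast (show 2 ≤ m by omega)
      linarith
    · have : (1 : ℝ) ≤ k := by exact_mod_cast hk
      have : (1 : ℝ) ≤ m := by exact_mod_cast hm
      nlinarith

end summand

theorem no_sum_eq_two_general (r : ℕ) (m k : Fin r → ℕ)
    (hm : ∀ i, 0 < m i) (a : ℝ) (ha1 : 5 / 6 < a) (ha2 : a < 1)
    (hle : ∀ i, ((m i : ℝ) - 1) / (m i) + (k i : ℝ) * a / (m i) ≤ 1)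
    (hk : ∃ i, 0 < k i) :
    ∑ i, (((m i : ℝ) - 1) / (m i) + (k i : ℝ) * a / (m i)) ≠ 2 := by
  change ∑ i, summand a (m i) (k i) ≠ 2
  intro hsum
  set t := fun i ↦ summand a (m i) (k i)
  have hk_le : ∀ i, k i ≤ 1 := fun i ↦ le_one_of_summand_le_one (hm i) (by linarith) (hle i)
  obtain ⟨i₀, hi₀⟩ := hk
  obtain ⟨hlo, hhi⟩ : t i₀ ∈ Set.Ico a 1 := by
    simpa [t, le_antisymm (hk_le i₀) hi₀] using summand_one_mem_Ico (hm i₀) ha2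
  have hrest : ∑ i ∈ univ.erase i₀, t i = 2 - t i₀ := by
    rw [← hsum, ← add_sum_erase _ _ (mem_univ i₀)]
    ring
  obtain ⟨i, j, hi, hj, hij⟩ := exists_pair_of_one_lt_sum_lt_three_halves
    (fun i _ ↦ summand_eq_zero_or_half_le (hm i) (by linarith)) (fun i _ ↦ hle i)
    (by linarith) (by linarith)
  have hk_zero : ∀ l, t l < 2 / 3 → k l = 0 := fun l hl ↦ by
    by_contra h
    have := summand_one_mem_Ico (hm l) ha2
    simp only [t, show k l = 1 by have := hk_le l; omega] at hl
    linarith [this.1]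
  rw [hrest] at hij
  have hi0 := hk_zero i (by linarith)
  have hj0 := hk_zero j (by linarith)
  simp only [t, hi0, hj0, summand_zero (hm i), summand_zero (hm j)] at hij
  exact one_div_add_one_div_notMem_Ioo (m i) (m j) ⟨by linarith, by linarith⟩

/-- The upper-bound half of Lemma 4.6: for `a ∈ (5/6, 1)`, no finite sum of
terms `tᵢ = (mᵢ-1)/mᵢ + kᵢ a/mᵢ ≤ 1` (with `mᵢ ≥ 1`, `kᵢ ≥ 0`, at least
one `kᵢ > 0`) equals `2`.  Hence no `a ∈ (5/6, 1)` lies in `N₁`. -/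
theorem no_sum_eq_two (r : ℕ) (hr : 1 ≤ r) (m k : Fin r → ℕ)
    (hm : ∀ i, 0 < m i) (a : ℝ) (ha1 : 5 / 6 < a) (ha2 : a < 1)
    (hle : ∀ i, ((m i : ℝ) - 1) / (m i) + (k i : ℝ) * a / (m i) ≤ 1)
    (hk : ∃ i, 0 < k i) :
    ∑ i, (((m i : ℝ) - 1) / (m i) + (k i : ℝ) * a / (m i)) ≠ 2 :=
  no_sum_eq_two_general r m k hm a ha1 ha2 hle hk
end
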